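/- Let P_m = v_1 v_2 ... v_m (m ≥ 4) be a path graph and suppose P_m = PCG(T, d_min, d_max) for some positive-edge-weighted tree T with a bijection from {v_1,...,v_m} to leaves of T. If d_T(v_1, v_i) > d_max for all 3 ≤ i ≤ m−1 and d_T(v_2, v_m) > d_max, then d_T(v_1, v_m) > d_max. -/
import Mathlib

open SimpleGraph

/-- A tree with positive real edge weights. -/
structure WTree (α : Type) where
  g : SimpleGraph α
  isTree : g.IsTree
  w : α → α → ℝ
  w_symm : ∀ a b, w a b = w b a
  w_pos : ∀ a b, g.Adj a b → 0 < w a b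

/-- The weighted distance between two vertices of a weighted tree: the sum of
the weights of the edges on the unique path between them. -/
noncomputable def WTree.dist {α : Type} (T : WTree α) (u v : α) : ℝ :=
  (((T.isTree.existsUnique_path u v).exists.choose).darts.map
    (fun d => T.w d.toProd.1 d.toProd.2)).sum

/-- A vertex of a weighted tree is a leaf if it has exactly one neighbor. -/
def WTree.IsLeaf {α : Type} (T : WTree α) (v : α) : Prop :=
  ∃! u, T.g.Adj v u

/-- `G = PCG(T, dmin, dmax)` via the leaf-assignment `f`. -/
def IsPCGWith {V β : Type} (G : SimpleGraph V) (T : WTree β) (f : V → β)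
    (dmin dmax : ℝ) : Prop :=
  Function.Injective f ∧ (∀ v, T.IsLeaf (f v)) ∧ (∀ b, T.IsLeaf b → ∃ v, f v = b) ∧
    ∀ u v : V, u ≠ v →
      (G.Adj u v ↔ dmin ≤ T.dist (f u) (f v) ∧ T.dist (f u) (f v) ≤ dmax)

/-- A graph is a pairwise compatibility graph. -/
def IsPCG {V : Type} (G : SimpleGraph V) : Prop :=
  ∃ (β : Type) (T : WTree β) (f : V → β) (dmin dmax : ℝ),
    0 ≤ dmin ∧ dmin ≤ dmax ∧ IsPCGWith G T f dmin dmax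

namespace WTree

variable {β : Type} (T : WTree β)

/-- Weight of a walk. -/
noncomputable def wt {u v : β} (p : T.g.Walk u v) : ℝ :=
  (p.darts.map (fun d => T.w d.toProd.1 d.toProd.2)).sum

lemma wt_nil {u : β} : T.wt (Walk.nil : T.g.Walk u u) = 0 := by simp [wt]

lemma wt_cons {u v x : β} (h : T.g.Adj u v) (p : T.g.Walk v x) :
    T.wt (Walk.cons h p) = T.w u v + T.wt p := by simp [wt]

lemma wt_append {u v x : β} (p : T.g.Walk u v) (q : T.g.Walk v x) :
    T.wt (p.append q) = T.wt p + T.wt q := by simp [wt]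

lemma wt_reverse {u v : β} (p : T.g.Walk u v) : T.wt p.reverse = T.wt p := by
  unfold wt
  rw [Walk.darts_reverse, List.map_reverse, List.sum_reverse, List.map_map]
  apply congrArg List.sum
  apply List.map_congr_left
  intro d _
  cases d with
  | mk pr hadj =>
    simp only [Function.comp_apply, Dart.symm]
    exact T.w_symm pr.2 pr.1

lemma wt_nonneg {u v : β} (p : T.g.Walk u v) : 0 ≤ T.wt p := by
  unfold wt
  apply List.sum_nonneg
  intro a ha
  obtain ⟨d, _, rfl⟩ := List.mem_map.mp ha
  exact le_of_lt (T.w_pos _ _ d.adj)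

lemma dist_eq {u v : β} {p : T.g.Walk u v} (hp : p.IsPath) : T.dist u v = T.wt p := by
  have e : (T.isTree.existsUnique_path u v).exists.choose = p :=
    (T.isTree.existsUnique_path u v).unique
      (T.isTree.existsUnique_path u v).exists.choose_spec hp
  unfold WTree.dist
  rw [e]
  rfl

lemma dist_self (u : β) : T.dist u u = 0 := by
  rw [dist_eq T (Walk.IsPath.nil : (Walk.nil : T.g.Walk u u).IsPath), wt_nil]

lemma dist_comm (u v : β) : T.dist u v = T.dist v u := by
  obtain ⟨p, hp⟩ := (T.isTree.existsUnique_path u v).exists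
  rw [dist_eq T hp, dist_eq T hp.reverse, wt_reverse]

lemma dist_adj {u v : β} (h : T.g.Adj u v) : T.dist u v = T.w u v := by
  have hp : (Walk.cons h Walk.nil).IsPath := by
    rw [Walk.cons_isPath_iff]
    exact ⟨Walk.IsPath.nil, by simp [h.ne]⟩
  rw [dist_eq T hp, wt_cons, wt_nil, add_zero]

lemma dist_split {u v c : β} {p : T.g.Walk u v} (hp : p.IsPath) (hc : c ∈ p.support) :
    T.dist u v = T.dist u c + T.dist c v := by
  classical
  rw [dist_eq T hp, ← Walk.take_spec p hc, wt_append,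
    ← dist_eq T (hp.takeUntil hc), ← dist_eq T (hp.dropUntil hc)]

lemma dist_le_edge {a b : β} (h : T.g.Adj a b) (v : β) :
    T.dist a v ≤ T.w a b + T.dist b v := by
  classical
  obtain ⟨Q, hQ⟩ := (T.isTree.existsUnique_path b v).exists
  by_cases ha : a ∈ Q.support
  · have h1 : T.dist b v = T.dist b a + T.dist a v := dist_split T hQ ha
    have h2 : T.dist b a = T.w b a := dist_adj T h.symm
    have h3 : T.w b a = T.w a b := T.w_symm b a
    have h4 : 0 < T.w a b := T.w_pos a b h
    linarith
  · have hp : (Walk.cons h Q).IsPath := hQ.cons ha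
    have := dist_eq T hp
    rw [wt_cons, ← dist_eq T hQ] at this
    linarith [this]

lemma dist_le_wt_add (v : β) : ∀ {u x : β} (p : T.g.Walk u x),
    T.dist u v ≤ T.wt p + T.dist x v := by
  intro u x p
  induction p with
  | nil => simp [wt_nil]
  | cons h q ih =>
    rw [wt_cons]
    have := dist_le_edge T h v
    linarith

lemma dist_triangle (u x v : β) : T.dist u v ≤ T.dist u x + T.dist x v := by
  obtain ⟨p, hp⟩ := (T.isTree.existsUnique_path u x).exists
  rw [dist_eq T hp]
  exact dist_le_wt_add T v p

lemma median {u x : β} (p : T.g.Walk u x) (v : β) : p.IsPath →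
    ∃ c ∈ p.support, T.dist u x = T.dist u c + T.dist c x ∧
      T.dist v x = T.dist v c + T.dist c x ∧ T.dist u v = T.dist u c + T.dist c v := by
  classical
  induction p with
  | nil =>
    intro _
    refine ⟨_, Walk.start_mem_support _, ?_, ?_, ?_⟩ <;> simp [dist_self]
  | @cons a b x' h q ih =>
    intro hp
    rw [Walk.cons_isPath_iff] at hp
    obtain ⟨hq, hu⟩ := hp
    have hax : T.dist a x' = T.w a b + T.dist b x' := by
      rw [dist_eq T (hq.cons hu (h := h)), wt_cons, ← dist_eq T hq]
    obtain ⟨Q, hQ⟩ := (T.isTree.existsUnique_path b v).exists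
    by_cases haQ : a ∈ Q.support
    · -- the path from b to v passes through a : the median is a itself
      refine ⟨a, Walk.start_mem_support _, by rw [dist_self, zero_add], ?_,
        by rw [dist_self, zero_add]⟩
      have hab : a ≠ b := h.ne
      have hr : (Q.dropUntil a haQ).IsPath := hQ.dropUntil haQ
      have hbr : b ∉ (Q.dropUntil a haQ).support := by
        intro hb
        have hnd : ((Q.takeUntil a haQ).support ++ (Q.dropUntil a haQ).support.tail).Nodup := by
          rw [← Walk.support_append, Walk.take_spec Q haQ]
          exact hQ.support_nodup
        have hb' : b ∈ (Q.dropUntil a haQ).support.tail := by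
          have e := (Q.dropUntil a haQ).support_eq_cons
          rw [e] at hb
          rcases List.mem_cons.mp hb with h1 | h1
          · exact absurd h1.symm hab
          · exact h1
        exact (List.disjoint_of_nodup_append hnd) (Walk.start_mem_support _) hb'
      have hdisj : ∀ y ∈ (Q.dropUntil a haQ).support, y ∉ q.support := by
        intro y hy hyq
        have hat : a ∉ (q.takeUntil y hyq).support :=
          fun ha' => hu (Walk.support_takeUntil_subset _ _ ha')
        have hs2 : (Walk.cons h (q.takeUntil y hyq)).IsPath := (hq.takeUntil hyq).cons hat
        have hs1 : ((Q.dropUntil a haQ).takeUntil y hy).IsPath := hr.takeUntil hy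
        have e : (Q.dropUntil a haQ).takeUntil y hy = Walk.cons h (q.takeUntil y hyq) :=
          (T.isTree.existsUnique_path a y).unique hs1 hs2
        apply hbr
        apply Walk.support_takeUntil_subset _ hy
        rw [e, Walk.support_cons]
        exact List.mem_cons_of_mem _ (Walk.start_mem_support _)
      have hpath : ((Q.dropUntil a haQ).reverse.append (Walk.cons h q)).IsPath := by
        rw [Walk.isPath_def, Walk.support_append, Walk.support_reverse]
        have ht : (Walk.cons h q).support.tail = q.support := rfl
        exact ht ▸ List.Nodup.append (List.nodup_reverse.mpr hr.support_nodup)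
          hq.support_nodup
          (fun y hy hy2 => hdisj y (List.mem_reverse.mp hy) hy2)
      have e1 : T.dist v x' = T.wt (Q.dropUntil a haQ) + T.wt (Walk.cons h q) := by
        rw [dist_eq T hpath, wt_append, wt_reverse]
      rw [e1, dist_comm T v a, dist_eq T hr, dist_eq T (hq.cons hu (h := h))]
    · -- the path from b to v avoids a
      have hav : T.dist a v = T.w a b + T.dist b v := by
        rw [dist_eq T (hQ.cons haQ (h := h)), wt_cons, ← dist_eq T hQ]
      obtain ⟨c, hc, h1, h2, h3⟩ := ih hq
      have tac : T.dist a c ≤ T.w a b + T.dist b c := by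
        have t := dist_triangle T a b c
        rw [dist_adj T h] at t
        exact t
      have t2 : T.dist a x' ≤ T.dist a c + T.dist c x' := dist_triangle T a c x'
      have hac : T.dist a c = T.w a b + T.dist b c := by
        have hge : T.w a b + T.dist b c ≤ T.dist a c := by linarith
        linarith
      refine ⟨c, ?_, ?_, h2, ?_⟩
      · rw [Walk.support_cons]; exact List.mem_cons_of_mem _ hc
      · rw [hax, h1, hac]; ring
      · rw [hav, h3, hac]; ring

lemma gromov (o x y z : β) :
    min (T.dist o x + T.dist o y - T.dist x y) (T.dist o y + T.dist o z - T.dist y z) ≤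
      T.dist o x + T.dist o z - T.dist x z := by
  classical
  obtain ⟨P, hP⟩ := (T.isTree.existsUnique_path o y).exists
  obtain ⟨c1, hc1, a1, b1, d1⟩ := median T P x hP
  obtain ⟨c2, hc2, a2, b2, d2⟩ := median T P z hP
  have t1 : T.dist x z ≤ T.dist x c1 + T.dist c1 z := dist_triangle T x c1 z
  have t2 : T.dist c1 z ≤ T.dist c1 c2 + T.dist c2 z := dist_triangle T c1 c2 z
  have cm1 : T.dist x c1 = T.dist c1 x := dist_comm T x c1
  have cm2 : T.dist y z = T.dist z y := dist_comm T y z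
  have cm3 : T.dist z c2 = T.dist c2 z := dist_comm T z c2
  have hc2' : c2 ∈ (P.takeUntil c1 hc1).support ∨ c2 ∈ (P.dropUntil c1 hc1).support := by
    have h' := hc2
    rw [← Walk.take_spec P hc1] at h'
    exact (Walk.mem_support_append_iff _ _).mp h'
  rcases hc2' with hA | hB
  · have e : T.dist o c1 = T.dist o c2 + T.dist c2 c1 :=
      dist_split T (hP.takeUntil hc1) hA
    have cm4 : T.dist c2 c1 = T.dist c1 c2 := dist_comm T c2 c1
    apply min_le_of_right_le
    linarith
  · have e : T.dist c1 y = T.dist c1 c2 + T.dist c2 y :=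
      dist_split T (hP.dropUntil hc1) hB
    apply min_le_of_left_le
    linarith

end WTree

theorem path_blue_propagation {β : Type} (m : ℕ) (hm : 4 ≤ m)
    (T : WTree β) (f : Fin m → β) (dmin dmax : ℝ)
    (h0 : 0 ≤ dmin) (h1 : dmin ≤ dmax)
    (hpcg : IsPCGWith (SimpleGraph.pathGraph m) T f dmin dmax)
    (hblue : ∀ i : Fin m, 2 ≤ i.val → i.val ≤ m - 2 →
      dmax < T.dist (f ⟨0, by omega⟩) (f i))
    (hblue2 : dmax < T.dist (f ⟨1, by omega⟩) (f ⟨m - 1, by omega⟩)) :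
    dmax < T.dist (f ⟨0, by omega⟩) (f ⟨m - 1, by omega⟩) := by
  classical
  obtain ⟨finj, hleaf, hsurj, hiff⟩ := hpcg
  by_contra hcon
  push_neg at hcon
  have hm0 : 0 < m := by omega
  set g : ℕ → β := fun k => f ⟨k % m, Nat.mod_lt k hm0⟩ with hgdef
  have hgeq : ∀ (k : ℕ) (h : k < m), g k = f ⟨k, h⟩ := by
    intro k h
    simp only [hgdef]
    congr 1
    exact Fin.ext (Nat.mod_eq_of_lt h)
  have hA : ∀ k : ℕ, k + 1 ≤ m - 1 → T.dist (g k) (g (k + 1)) ≤ dmax := by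
    intro k hk
    have hk1 : k < m := by omega
    have hk2 : k + 1 < m := by omega
    rw [hgeq k hk1, hgeq (k + 1) hk2]
    have hne : (⟨k, hk1⟩ : Fin m) ≠ ⟨k + 1, hk2⟩ := by
      intro hh; rw [Fin.mk.injEq] at hh; omega
    have hadj : (pathGraph m).Adj ⟨k, hk1⟩ ⟨k + 1, hk2⟩ := by
      rw [pathGraph_adj]; exact Or.inl rfl
    exact ((hiff _ _ hne).mp hadj).2
  have hB : ∀ k : ℕ, 2 ≤ k → k ≤ m - 2 → dmax < T.dist (g 0) (g k) := by
    intro k h2 hk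
    have hk1 : k < m := by omega
    rw [hgeq 0 (by omega), hgeq k hk1]
    exact hblue ⟨k, hk1⟩ h2 hk
  have hB2 : dmax < T.dist (g 1) (g (m - 1)) := by
    rw [hgeq 1 (by omega), hgeq (m - 1) (by omega)]
    exact hblue2
  have hcon' : T.dist (g 0) (g (m - 1)) ≤ dmax := by
    rw [hgeq 0 (by omega), hgeq (m - 1) (by omega)]
    exact hcon
  have h01 : T.dist (g 0) (g 1) ≤ dmax := hA 0 (by omega)
  have key : ∀ k : ℕ, 2 ≤ k → k ≤ m - 1 →
      T.dist (g 0) (g 1) + T.dist (g 0) (g (m - 1)) - dmax <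
        T.dist (g 0) (g 1) + T.dist (g 0) (g k) - T.dist (g 1) (g k) := by
    intro k
    induction k with
    | zero => intro h _; exact absurd h (by omega)
    | succ n ih =>
      intro h2 hk
      rcases Nat.lt_or_ge n 2 with hn2 | hn2
      · have hn : n = 1 := by omega
        subst hn
        have h12 : T.dist (g 1) (g 2) ≤ dmax := hA 1 (by omega)
        have h02 : dmax < T.dist (g 0) (g 2) := hB 2 (by omega) (by omega)
        linarith
      · have ihh := ih (by omega) (by omega)
        have grom := WTree.gromov T (g 0) (g 1) (g n) (g (n + 1))
        have hAn : T.dist (g n) (g (n + 1)) ≤ dmax := hA n hk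
        have h0n : dmax < T.dist (g 0) (g n) := hB n hn2 (by omega)
        rcases Nat.lt_or_ge (n + 1) (m - 1) with hlt | hge
        · have h0n1 : dmax < T.dist (g 0) (g (n + 1)) := hB (n + 1) (by omega) (by omega)
          have hterm : T.dist (g 0) (g 1) + T.dist (g 0) (g (m - 1)) - dmax <
              T.dist (g 0) (g n) + T.dist (g 0) (g (n + 1)) - T.dist (g n) (g (n + 1)) := by
            linarith
          exact lt_of_lt_of_le (lt_min ihh hterm) grom
        · have hEq : n + 1 = m - 1 := by omega
          have h0n1 : T.dist (g 0) (g (n + 1)) = T.dist (g 0) (g (m - 1)) := by rw [hEq]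
          have hterm : T.dist (g 0) (g 1) + T.dist (g 0) (g (m - 1)) - dmax <
              T.dist (g 0) (g n) + T.dist (g 0) (g (n + 1)) - T.dist (g n) (g (n + 1)) := by
            linarith
          exact lt_of_lt_of_le (lt_min ihh hterm) grom
  have hfin := key (m - 1) (by omega) le_rfl
  linarith [hB2, hfin]
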